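/- arXiv:2407.19455 — 3 statements merged into one kernel-verified Lean document; each statement's English description precedes it below -/
import Mathlib

section
/- Let X be a reflexive Banach space and Y any Banach space over the same field K (ℝ or ℂ). Let T ∈ L(X,Y) with ‖T‖ = 1, suppose the subspace K(X,Y) of compact operators is an M-ideal in L(X,Y), and dist(T, K(X,Y)) < 1. Suppose {x₁, x₂, …, x_r} is a maximal linearly independent subset of M_T ∩ Ext(B_X) and Txᵢ is mᵢ-smooth for each 1 ≤ i ≤ r. Then the dimension of the linear span of J(T) is at least m₁ + m₂ + … + m_r. -/
/-!
If `x` is a norm-one vector at which `T` (of norm one) attains its norm and `f ∈ J(T x)`, then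
`f ⊗ x : A ↦ f (A x)` lies in `J(T)`. Picking, for each `i`, `mᵢ` linearly independent functionals
in `J(T xᵢ)` gives `∑ mᵢ` elements `f ⊗ xᵢ` of `J(T)`. They are linearly independent: with
continuous functionals `φᵢ` biorthogonal to the `xⱼ`, evaluating at the rank-one operators
`φᵢ(·) y` isolates the block belonging to `xᵢ`.
-/

open Metric Set
open scoped ENNReal

noncomputable section

/-- The set `J(x)` of support functionals at `x`: norm-one functionals with `f x = 1`. -/
def suppFunctionals (𝕜 : Type*) [RCLike 𝕜] {X : Type*} [NormedAddCommGroup X]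
    [NormedSpace 𝕜 X] (x : X) : Set (StrongDual 𝕜 X) :=
  {f | ‖f‖ = 1 ∧ f x = 1}

/-- `x` is `k`-smooth: the span of its support functionals has dimension `k`. -/
def IsKSmooth (𝕜 : Type*) [RCLike 𝕜] {X : Type*} [NormedAddCommGroup X]
    [NormedSpace 𝕜 X] (x : X) (k : ℕ) : Prop :=
  Module.rank 𝕜 ↥(Submodule.span 𝕜 (suppFunctionals 𝕜 x)) = k

/-- Extreme points of a set `A` (real convex combinations, scalars embedded in `𝕜`). -/
def ExtremePts (𝕜 : Type*) [RCLike 𝕜] {X : Type*} [NormedAddCommGroup X]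
    [NormedSpace 𝕜 X] (A : Set X) : Set X :=
  {z | z ∈ A ∧ ∀ x ∈ A, ∀ y ∈ A, ∀ t : ℝ, 0 < t → t < 1 →
    z = ((1 - t : ℝ) : 𝕜) • x + ((t : ℝ) : 𝕜) • y → x = z ∧ y = z}

/-- A strictly convex space: every unit vector is an extreme point of the closed unit ball. -/
def StrictlyConvexSp (𝕜 : Type*) [RCLike 𝕜] (X : Type*) [NormedAddCommGroup X]
    [NormedSpace 𝕜 X] : Prop :=
  ∀ x : X, ‖x‖ = 1 → x ∈ ExtremePts 𝕜 (closedBall (0 : X) 1)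

/-- A smooth space: every unit vector has a unique support functional. -/
def SmoothSp (𝕜 : Type*) [RCLike 𝕜] (X : Type*) [NormedAddCommGroup X]
    [NormedSpace 𝕜 X] : Prop :=
  ∀ x : X, ‖x‖ = 1 → ∃ f, suppFunctionals 𝕜 x = {f}

/-- Birkhoff–James orthogonality: `x ⊥_B y` iff `‖x + c • y‖ ≥ ‖x‖` for all scalars `c`. -/
def BJOrtho (𝕜 : Type*) [RCLike 𝕜] {X : Type*} [NormedAddCommGroup X]
    [NormedSpace 𝕜 X] (x y : X) : Prop :=
  ∀ c : 𝕜, ‖x‖ ≤ ‖x + c • y‖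

/-- The norm attainment set `M_T` of an operator `T`. -/
def normAttainSet (𝕜 : Type*) [RCLike 𝕜] {X Y : Type*} [NormedAddCommGroup X]
    [NormedSpace 𝕜 X] [NormedAddCommGroup Y] [NormedSpace 𝕜 Y] (T : X →L[𝕜] Y) : Set X :=
  {x | ‖x‖ = 1 ∧ ‖T x‖ = ‖T‖}

/-- `V` is an M-ideal in `Z`: the dual of `Z` splits as an ℓ¹ direct sum of a closed
subspace `S` and the annihilator of `V`. -/
def IsMIdeal (𝕜 : Type*) [RCLike 𝕜] {Z : Type*} [NormedAddCommGroup Z]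
    [NormedSpace 𝕜 Z] (V : Submodule 𝕜 Z) : Prop :=
  IsClosed (V : Set Z) ∧
  ∃ S : Submodule 𝕜 (StrongDual 𝕜 Z), IsClosed (S : Set (StrongDual 𝕜 Z)) ∧
    ∀ f : StrongDual 𝕜 Z,
      (∃! gh : StrongDual 𝕜 Z × StrongDual 𝕜 Z,
        gh.1 ∈ S ∧ (∀ v ∈ V, gh.2 v = 0) ∧ f = gh.1 + gh.2) ∧
      (∀ g h : StrongDual 𝕜 Z, g ∈ S → (∀ v ∈ V, h v = 0) → f = g + h →
        ‖f‖ = ‖g‖ + ‖h‖)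

/-- The subspace of compact operators in `L(X,Y)`. -/
def compactOperators (𝕜 : Type*) [RCLike 𝕜] (X Y : Type*) [NormedAddCommGroup X]
    [NormedSpace 𝕜 X] [NormedAddCommGroup Y] [NormedSpace 𝕜 Y] :
    Submodule 𝕜 (X →L[𝕜] Y) where
  carrier := {T | IsCompactOperator T}
  add_mem' := fun h1 h2 => h1.add h2
  zero_mem' := isCompactOperator_zero
  smul_mem' := fun c _ h => h.smul c

/-- A reflexive space: the canonical embedding into the double dual is surjective. -/
def ReflexiveSp (𝕜 : Type*) [RCLike 𝕜] (X : Type*) [NormedAddCommGroup X]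
    [NormedSpace 𝕜 X] : Prop :=
  Function.Surjective (NormedSpace.inclusionInDoubleDual 𝕜 X)

/-- A coproximinal subspace: every point has a best coapproximation out of `V`. -/
def Coproximinal (𝕜 : Type*) [RCLike 𝕜] {Y : Type*} [NormedAddCommGroup Y]
    [NormedSpace 𝕜 Y] (V : Submodule 𝕜 Y) : Prop :=
  ∀ y : Y, ∃ y₀ ∈ V, ∀ z ∈ V, ‖y₀ - z‖ ≤ ‖y - z‖

/-- The functional `y* ⊗ x` on `L(X,Y)` given by `A ↦ y*(A x)`. -/
def tensorFunctional (𝕜 : Type*) [RCLike 𝕜] {X Y : Type*} [NormedAddCommGroup X]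
    [NormedSpace 𝕜 X] [NormedAddCommGroup Y] [NormedSpace 𝕜 Y]
    (f : StrongDual 𝕜 Y) (x : X) : StrongDual 𝕜 (X →L[𝕜] Y) :=
  f.comp (ContinuousLinearMap.apply 𝕜 Y x)

/-- The set of support functionals of images `Tx` for `x ∈ R ∩ Ext(B_X)`. -/
def suppOfImage (𝕜 : Type*) [RCLike 𝕜] {X Y : Type*} [NormedAddCommGroup X]
    [NormedSpace 𝕜 X] [NormedAddCommGroup Y] [NormedSpace 𝕜 Y]
    (T : X →L[𝕜] Y) (R : Set X) : Set (StrongDual 𝕜 Y) :=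
  {f | ∃ x ∈ R ∩ ExtremePts 𝕜 (closedBall (0 : X) 1), f ∈ suppFunctionals 𝕜 (T x)}

/-- The subspace `Z ⊆ 𝕜^{np}` from the definition of the index of smoothness, relative to
bases `v` of `span R` and `w` of `W`. -/
def indexSubspace (𝕜 : Type*) [RCLike 𝕜] {X Y : Type*} [NormedAddCommGroup X]
    [NormedSpace 𝕜 X] [NormedAddCommGroup Y] [NormedSpace 𝕜 Y]
    (T : X →L[𝕜] Y) (R : Set X) {n p : ℕ} (v : Fin n → X)
    (w : Fin p → StrongDual 𝕜 Y) : Submodule 𝕜 (Fin n × Fin p → 𝕜) :=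
  Submodule.span 𝕜 {z | ∃ (α : Fin n → 𝕜) (β : Fin p → 𝕜),
    (∑ i, α i • v i) ∈ R ∩ ExtremePts 𝕜 (closedBall (0 : X) 1) ∧
    (∑ j, β j • w j) ∈ ExtremePts 𝕜 (suppFunctionals 𝕜 (T (∑ i, α i • v i))) ∧
    z = fun ij => α ij.1 * β ij.2}

/-- `v` is a basis of the span of the set `R`. -/
def IsBasisOfSpan (𝕜 : Type*) [RCLike 𝕜] {E : Type*} [AddCommGroup E] [Module 𝕜 E]
    {n : ℕ} (v : Fin n → E) (R : Set E) : Prop :=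
  LinearIndependent 𝕜 v ∧ Submodule.span 𝕜 (Set.range v) = Submodule.span 𝕜 R

/-- The index of smoothness of `T` with respect to `R` equals `k`: for every choice of bases
of `span R` and of `W`, the corresponding subspace `Z` has dimension `k`. -/
def HasIndexOfSmoothness (𝕜 : Type*) [RCLike 𝕜] {X Y : Type*} [NormedAddCommGroup X]
    [NormedSpace 𝕜 X] [NormedAddCommGroup Y] [NormedSpace 𝕜 Y]
    (T : X →L[𝕜] Y) (R : Set X) (k : ℕ) : Prop :=
  ∀ (n p : ℕ) (v : Fin n → X) (w : Fin p → StrongDual 𝕜 Y),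
    IsBasisOfSpan 𝕜 v R → IsBasisOfSpan 𝕜 w (suppOfImage 𝕜 T R) →
      Module.finrank 𝕜 ↥(indexSubspace 𝕜 T R v w) = k

/-- A polyhedral finite-dimensional real space: the unit ball has finitely many
extreme points. -/
def PolyhedralSp (X : Type*) [NormedAddCommGroup X] [NormedSpace ℝ X] : Prop :=
  (ExtremePts ℝ (closedBall (0 : X) 1)).Finite

/-- A face of the unit ball of a real space. -/
def IsFaceOfBall {X : Type*} [NormedAddCommGroup X] [NormedSpace ℝ X] (F : Set X) : Prop :=
  (∀ x ∈ F, ‖x‖ = 1) ∧ Convex ℝ F ∧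
  ∀ x₁ x₂ : X, ‖x₁‖ = 1 → ‖x₂‖ = 1 → ∀ t : ℝ, 0 < t → t < 1 →
    (1 - t) • x₁ + t • x₂ ∈ F → x₁ ∈ F ∧ x₂ ∈ F

/-- The dimension of a face: the dimension of the span of differences of its elements. -/
def faceDim {X : Type*} [NormedAddCommGroup X] [NormedSpace ℝ X] (F : Set X) : ℕ :=
  Module.finrank ℝ ↥(Submodule.span ℝ {d : X | ∃ v ∈ F, ∃ w ∈ F, d = v - w})

/-- `u` is a strong Auerbach basis of the subspace `V`. -/
def IsStrongAuerbachBasis (𝕜 : Type*) [RCLike 𝕜] {Y : Type*} [NormedAddCommGroup Y]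
    [NormedSpace 𝕜 Y] {d : ℕ} (u : Fin d → Y) (V : Submodule 𝕜 Y) : Prop :=
  (∀ i, u i ∈ V) ∧ (∀ i, ‖u i‖ = 1) ∧ LinearIndependent 𝕜 u ∧
  Submodule.span 𝕜 (Set.range u) = V ∧
  ∀ C : Set (Fin d), ∀ a ∈ Submodule.span 𝕜 (u '' C), ∀ b ∈ Submodule.span 𝕜 (u '' Cᶜ),
    BJOrtho 𝕜 a b

end

theorem exists_linearIndependent_fin_of_rank_span_eq {K V : Type*}
    [DivisionRing K] [AddCommGroup V] [Module K V] {s : Set V} {n : ℕ}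
    (h : Module.rank K (Submodule.span K s) = n) :
    ∃ f : Fin n → V, LinearIndependent K f ∧ ∀ j, f j ∈ s := by
  obtain ⟨b, hbs, hspan, hb⟩ := exists_linearIndependent K s
  rw [← hspan, rank_span_set hb, Cardinal.mk_eq_nat_iff] at h
  obtain ⟨e⟩ := h
  exact ⟨fun j ↦ e.symm j, hb.comp _ e.symm.injective, fun j ↦ hbs (e.symm j).2⟩

theorem LinearIndependent.card_le_rank_span {K V ι : Type*} [DivisionRing K] [AddCommGroup V]
    [Module K V] [Fintype ι] {s : Set V} {g : ι → V} (hg : LinearIndependent K g)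
    (hs : ∀ i, g i ∈ s) : (Fintype.card ι : Cardinal) ≤ Module.rank K (Submodule.span K s) := by
  have hg' : LinearIndependent K
      fun i ↦ (⟨g i, Submodule.subset_span (hs i)⟩ : Submodule.span K s) :=
    .of_comp (Submodule.span K s).subtype hg
  simpa using hg'.cardinal_lift_le_rank

section

open ContinuousLinearMap

variable {𝕜 X Y : Type*} [RCLike 𝕜] [NormedAddCommGroup X] [NormedSpace 𝕜 X]
  [NormedAddCommGroup Y] [NormedSpace 𝕜 Y]

theorem LinearIndependent.exists_biorthogonal_strongDual {ι : Type*} [Finite ι] [DecidableEq ι]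
    {x : ι → X} (hx : LinearIndependent 𝕜 x) :
    ∃ φ : ι → StrongDual 𝕜 X, ∀ i j, φ i (x j) = if i = j then 1 else 0 := by
  have : FiniteDimensional 𝕜 (Submodule.span 𝕜 (Set.range x)) :=
    .span_of_finite 𝕜 (Set.finite_range x)
  let b := Module.Basis.span hx
  choose φ hφ _ using fun i ↦ exists_extension_norm_eq _ (b.coord i).toContinuousLinearMap
  refine ⟨φ, fun i j ↦ ?_⟩
  have hb : (b j : X) = x j := congrArg Subtype.val (Module.Basis.span_apply hx j)
  rw [← hb, hφ]
  simp [Finsupp.single_apply, eq_comm]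

@[simp]
theorem tensorFunctional_apply (f : StrongDual 𝕜 Y) (x : X) (A : X →L[𝕜] Y) :
    tensorFunctional 𝕜 f x A = f (A x) := rfl

theorem norm_tensorFunctional_le (f : StrongDual 𝕜 Y) (x : X) :
    ‖tensorFunctional 𝕜 f x‖ ≤ ‖f‖ * ‖x‖ :=
  opNorm_le_bound _ (by positivity) fun A ↦ calc
    ‖f (A x)‖ ≤ ‖f‖ * (‖A‖ * ‖x‖) := f.le_opNorm_of_le (A.le_opNorm x)
    _ = ‖f‖ * ‖x‖ * ‖A‖ := by ring

theorem tensorFunctional_mem_suppFunctionals {T : X →L[𝕜] Y} (hT : ‖T‖ ≤ 1) {x : X}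
    (hx : ‖x‖ ≤ 1) {f : StrongDual 𝕜 Y} (hf : f ∈ suppFunctionals 𝕜 (T x)) :
    tensorFunctional 𝕜 f x ∈ suppFunctionals 𝕜 T := by
  obtain ⟨hf_norm, hf_val⟩ := hf
  refine ⟨le_antisymm ?_ ?_, hf_val⟩
  · exact (norm_tensorFunctional_le f x).trans (by simpa [hf_norm] using hx)
  · calc (1 : ℝ) = ‖tensorFunctional 𝕜 f x T‖ := by simp [hf_val]
      _ ≤ ‖tensorFunctional 𝕜 f x‖ * ‖T‖ := le_opNorm _ _
      _ ≤ ‖tensorFunctional 𝕜 f x‖ := mul_le_of_le_one_right (opNorm_nonneg _) hT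

theorem linearIndependent_sigma_tensorFunctional {ι : Type*} [Finite ι] {κ : ι → Type*}
    {x : ι → X} (hx : LinearIndependent 𝕜 x) {f : ∀ i, κ i → StrongDual 𝕜 Y}
    (hf : ∀ i, LinearIndependent 𝕜 (f i)) :
    LinearIndependent 𝕜 fun p : Σ i, κ i ↦ tensorFunctional 𝕜 (f p.1 p.2) (x p.1) := by
  classical
  obtain ⟨φ, hφ⟩ := hx.exists_biorthogonal_strongDual
  -- `Θ Φ i = (y ↦ Φ ((φ i).smulRight y))`, which sends `f ⊗ x k` to `Pi.single k f`.
  let Θ : StrongDual 𝕜 (X →L[𝕜] Y) →ₗ[𝕜] ι → StrongDual 𝕜 Y :=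
    LinearMap.pi fun i ↦ ((compL 𝕜 Y (X →L[𝕜] Y) 𝕜).flip (smulRightL 𝕜 X Y (φ i))).toLinearMap
  have hΘ : (Θ ∘ fun p : Σ i, κ i ↦ tensorFunctional 𝕜 (f p.1 p.2) (x p.1)) =
      fun p ↦ Pi.single p.1 (f p.1 p.2) := by
    ext ⟨k, j⟩ i y
    by_cases hik : i = k
    · subst hik; simp [Θ, hφ]
    · simp [Θ, hφ, hik]
  exact .of_comp Θ (hΘ ▸ Pi.linearIndependent_single f hf)

end

theorem rank_span_suppFunctionals_ge_sum_general
    {𝕜 X Y : Type*} [RCLike 𝕜]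
    [NormedAddCommGroup X] [NormedSpace 𝕜 X]
    [NormedAddCommGroup Y] [NormedSpace 𝕜 Y]
    (T : X →L[𝕜] Y) (hT : ‖T‖ = 1)
    {r : ℕ} (x : Fin r → X)
    (hmem : ∀ i, x i ∈ normAttainSet 𝕜 T ∩ ExtremePts 𝕜 (closedBall (0 : X) 1))
    (hind : LinearIndependent 𝕜 x)
    (m : Fin r → ℕ) (hsm : ∀ i, IsKSmooth 𝕜 (T (x i)) (m i)) :
    ((∑ i, m i : ℕ) : Cardinal) ≤
      Module.rank 𝕜 ↥(Submodule.span 𝕜 (suppFunctionals 𝕜 T)) := by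
  choose f hf_indep hf_mem using fun i ↦ exists_linearIndependent_fin_of_rank_span_eq (hsm i)
  have hsupp : ∀ p : Σ i, Fin (m i),
      tensorFunctional 𝕜 (f p.1 p.2) (x p.1) ∈ suppFunctionals 𝕜 T := fun p ↦
    tensorFunctional_mem_suppFunctionals hT.le (hmem p.1).1.1.le (hf_mem p.1 p.2)
  simpa using (linearIndependent_sigma_tensorFunctional hind hf_indep).card_le_rank_span hsupp

theorem rank_span_suppFunctionals_ge_sum
    {𝕜 X Y : Type*} [RCLike 𝕜]
    [NormedAddCommGroup X] [NormedSpace 𝕜 X] [CompleteSpace X]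
    [NormedAddCommGroup Y] [NormedSpace 𝕜 Y] [CompleteSpace Y]
    (hXrefl : ReflexiveSp 𝕜 X)
    (T : X →L[𝕜] Y) (hT : ‖T‖ = 1)
    (hMideal : IsMIdeal 𝕜 (compactOperators 𝕜 X Y))
    (hdist : Metric.infDist T (compactOperators 𝕜 X Y : Set (X →L[𝕜] Y)) < 1)
    {r : ℕ} (x : Fin r → X)
    (hmem : ∀ i, x i ∈ normAttainSet 𝕜 T ∩ ExtremePts 𝕜 (closedBall (0 : X) 1))
    (hind : LinearIndependent 𝕜 x)
    (hmax : ∀ z ∈ normAttainSet 𝕜 T ∩ ExtremePts 𝕜 (closedBall (0 : X) 1),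
      z ∈ Submodule.span 𝕜 (Set.range x))
    (m : Fin r → ℕ) (hsm : ∀ i, IsKSmooth 𝕜 (T (x i)) (m i)) :
    ((∑ i, m i : ℕ) : Cardinal) ≤
      Module.rank 𝕜 ↥(Submodule.span 𝕜 (suppFunctionals 𝕜 T)) :=
  rank_span_suppFunctionals_ge_sum_general T hT x hmem hind m hsm
end

section
/- Let X and Y be finite-dimensional polyhedral real Banach spaces with dim X = m and dim Y = n, and let T ∈ L(X,Y) with ‖T‖ = 1. Then T is an extreme point of the closed unit ball of L(X,Y) if and only if i_{M_T}(T) = mn. -/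
open Metric Set
open scoped ENNReal

open Filter Topology

/-!
Say that `D` vanishes on the support pairs of `T` if `f (D x) = 0` for every extreme point `x`
of `B_X` in `M_T` and every extreme support functional `f` of `T x`. If `T ∈ openSegment A B`
inside the unit ball, then `A - T` does, so `T` is extreme as soon as only `D = 0` does.
Conversely, for polyhedral `X` and `Y` the dual ball of `Y` is polyhedral too, and `‖S‖ ≤ 1`
need only be checked on the finitely many pairs of extreme points `(x, f)`: a pair with
`f (T x) = 1` does not see such a `D` and the other pairs have slack, so `T ± ε D` stays in the
ball for small `ε`.

In coordinates `v` of `X` and `w` of `Y*`, the pairing `(D, z) ↦ ∑ z (i, j) * w j (D (v i))`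
identifies `L(X, Y)` with the dual of `ℝ^{m n}`, and `D` pairs with the generator `α ⊗ β` of
`Z` to `(∑ β j • w j) (D (∑ α i • v i))`. So these operators `D` form the annihilator of `Z`,
which is trivial iff `Z` is everything; dimension counting shows that index `m n` forces
`span M_T = X` and `W = Y*`, where the coordinates live.
-/

section ExtremePoints

variable {E : Type*} [NormedAddCommGroup E] [NormedSpace ℝ E]

theorem extremePts_eq_extremePoints (A : Set E) : ExtremePts ℝ A = A.extremePoints ℝ := by
  ext z
  refine ⟨fun ⟨hz, h⟩ => mem_extremePoints_iff_left.2 ⟨hz, ?_⟩,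
    fun hz => ⟨hz.1, fun x hx y hy t ht₀ ht₁ hxy => ?_⟩⟩
  · rintro x hx y hy ⟨a, b, ha, hb, hab, rfl⟩
    obtain rfl : a = 1 - b := by linarith
    exact (h x hx y hy b hb (by linarith) rfl).1
  · have hseg : z ∈ openSegment ℝ x y := ⟨1 - t, t, by linarith, ht₀, by ring, hxy.symm⟩
    exact ⟨(mem_extremePoints_iff_left.1 hz).2 x hx y hy hseg,
      (mem_extremePoints_iff_left.1 hz).2 y hy x hx (openSegment_symm ℝ x y ▸ hseg)⟩

theorem eq_zero_of_add_mem_of_sub_mem {A : Set E} {z d : E} (hz : z ∈ A.extremePoints ℝ)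
    (h₁ : z + d ∈ A) (h₂ : z - d ∈ A) : d = 0 := by
  have : z + d = z := (mem_extremePoints_iff_left.1 hz).2 _ h₁ _ h₂
    ⟨1 / 2, 1 / 2, by norm_num, by norm_num, by norm_num, by module⟩
  simpa using this

theorem apply_le_one_of_norm_le_one {f : StrongDual ℝ E} (hf : ‖f‖ ≤ 1) {y : E}
    (hy : ‖y‖ ≤ 1) : f y ≤ 1 :=
  (Real.le_norm_self _).trans ((f.le_opNorm y).trans (mul_le_one₀ hf (norm_nonneg _) hy))

variable [FiniteDimensional ℝ E]

theorem closedBall_subset_of_extremePoints_subset {C : Set E} (hC : Convex ℝ C)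
    (hCc : IsClosed C) (h : (closedBall (0 : E) 1).extremePoints ℝ ⊆ C) :
    closedBall (0 : E) 1 ⊆ C := by
  rw [← closure_convexHull_extremePoints (isCompact_closedBall 0 1) (convex_closedBall 0 1)]
  exact closure_minimal (convexHull_min h hC) hCc

end ExtremePoints

theorem Set.Finite.exists_pos_forall_add_mul_le {ι : Type*} {s : Set ι} (hs : s.Finite)
    {a b : ι → ℝ} (ha : ∀ i ∈ s, a i ≤ 1) (hb : ∀ i ∈ s, a i = 1 → b i = 0) :
    ∃ ε > 0, ∀ i ∈ s, ∀ c : ℝ, |c| ≤ ε → a i + c * b i ≤ 1 := by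
  have hev : ∀ i ∈ s, ∀ᶠ ε in 𝓝 (0 : ℝ), a i + ε * |b i| ≤ 1 := by
    intro i hi
    rcases (ha i hi).lt_or_eq with hlt | heq
    · have : Tendsto (fun ε => a i + ε * |b i|) (𝓝 0) (𝓝 (a i)) := by
        simpa using ((tendsto_id (x := 𝓝 (0 : ℝ))).mul_const |b i|).const_add (a i)
      exact this.eventually (ge_mem_nhds hlt)
    · simp [hb i hi heq, heq]
  obtain ⟨ε, hε, hε_pos⟩ :=
    (((hs.eventually_all.2 hev).filter_mono nhdsWithin_le_nhds).and
      (self_mem_nhdsWithin : Set.Ioi (0 : ℝ) ∈ 𝓝[>] 0)).exists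
  refine ⟨ε, hε_pos, fun i hi c hc => (hε i hi).trans' ?_⟩
  have : c * b i ≤ ε * |b i| := calc
    c * b i ≤ |c| * |b i| := by rw [← abs_mul]; exact le_abs_self _
    _ ≤ ε * |b i| := by gcongr
  linarith

section Polyhedral

variable {X Y : Type*} [NormedAddCommGroup X] [NormedSpace ℝ X] [FiniteDimensional ℝ X]
  [NormedAddCommGroup Y] [NormedSpace ℝ Y] [FiniteDimensional ℝ Y]

theorem norm_le_one_of_forall_extremePoints {g : StrongDual ℝ Y}
    (h : ∀ y ∈ (closedBall (0 : Y) 1).extremePoints ℝ, g y ≤ 1) : ‖g‖ ≤ 1 := by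
  have hball : closedBall (0 : Y) 1 ⊆ {y | g y ≤ 1} :=
    closedBall_subset_of_extremePoints_subset (convex_halfSpace_le g.isLinear 1)
      (isClosed_le g.continuous continuous_const) h
  refine ContinuousLinearMap.opNorm_le_of_unit_norm zero_le_one fun y hy => ?_
  have h₁ : g y ≤ 1 := hball (by simp [hy])
  have h₂ : g (-y) ≤ 1 := hball (by simp [hy])
  rw [map_neg] at h₂
  exact abs_le.2 ⟨by linarith, h₁⟩

theorem norm_le_one_of_forall_extremePoints_dual {y : Y}
    (h : ∀ f ∈ (closedBall (0 : StrongDual ℝ Y) 1).extremePoints ℝ, f y ≤ 1) :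
    ‖y‖ ≤ 1 := by
  obtain ⟨g, hg, hgy⟩ := exists_dual_vector'' ℝ y
  have hball : closedBall (0 : StrongDual ℝ Y) 1 ⊆ {f | f y ≤ 1} :=
    closedBall_subset_of_extremePoints_subset
      (convex_halfSpace_le (ContinuousLinearMap.apply ℝ ℝ y).isLinear 1)
      (isClosed_le (ContinuousLinearMap.apply ℝ ℝ y).continuous continuous_const) h
  simpa [hgy] using hball (mem_closedBall_zero_iff.2 hg)

theorem opNorm_le_one_of_forall_extremePoints {S : X →L[ℝ] Y}
    (h : ∀ x ∈ (closedBall (0 : X) 1).extremePoints ℝ,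
      ∀ f ∈ (closedBall (0 : StrongDual ℝ Y) 1).extremePoints ℝ, f (S x) ≤ 1) :
    ‖S‖ ≤ 1 := by
  refine ContinuousLinearMap.opNorm_le_of_unit_norm zero_le_one fun x hx => ?_
  refine norm_le_one_of_forall_extremePoints_dual fun f hf => ?_
  have hfS : ‖f.comp S‖ ≤ 1 := norm_le_one_of_forall_extremePoints fun x hx' => h x hx' f hf
  exact apply_le_one_of_norm_le_one hfS hx.le

theorem span_setOf_apply_eq_one_eq_top
    (hY : ((closedBall (0 : Y) 1).extremePoints ℝ).Finite) {f : StrongDual ℝ Y}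
    (hf : f ∈ (closedBall (0 : StrongDual ℝ Y) 1).extremePoints ℝ) :
    Submodule.span ℝ {y ∈ (closedBall (0 : Y) 1).extremePoints ℝ | f y = 1} = ⊤ := by
  by_contra hspan
  obtain ⟨h, hh, hker⟩ := Submodule.exists_le_ker_of_lt_top _ (lt_top_iff_ne_top.2 hspan)
  set g : StrongDual ℝ Y := LinearMap.toContinuousLinearMap h
  have hf₁ : ‖f‖ ≤ 1 := mem_closedBall_zero_iff.1 hf.1
  obtain ⟨ε, hε, hle⟩ := hY.exists_pos_forall_add_mul_le (a := f) (b := g)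
    (fun y hy => apply_le_one_of_norm_le_one hf₁ (mem_closedBall_zero_iff.1 hy.1))
    (fun y hy hfy => hker (Submodule.subset_span ⟨hy, hfy⟩))
  have hball : ∀ c : ℝ, |c| ≤ ε → f + c • g ∈ closedBall 0 1 := fun c hc =>
    mem_closedBall_zero_iff.2 (norm_le_one_of_forall_extremePoints fun y hy => by
      simpa using hle y hy c hc)
  have hεg : ε • g = 0 := eq_zero_of_add_mem_of_sub_mem hf (hball ε (abs_of_pos hε).le)
    (by convert hball (-ε) (by simp [abs_of_pos hε]) using 1; module)
  exact hh (LinearMap.ext fun y => (by simpa [hε.ne'] using congr($hεg y) : g y = 0))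

theorem finite_extremePoints_dual
    (hY : ((closedBall (0 : Y) 1).extremePoints ℝ).Finite) :
    ((closedBall (0 : StrongDual ℝ Y) 1).extremePoints ℝ).Finite := by
  set ext := (closedBall (0 : Y) 1).extremePoints ℝ
  refine Set.Finite.of_finite_image (f := fun f : StrongDual ℝ Y => {y ∈ ext | f y = 1})
    (hY.finite_subsets.subset ?_) fun f hf g _ hfg => ?_
  · rintro _ ⟨f, -, rfl⟩ y hy
    exact hy.1
  · refine ContinuousLinearMap.coe_injective
      (LinearMap.ext_on (span_setOf_apply_eq_one_eq_top hY hf) ?_)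
    rintro y ⟨hy, hfy⟩
    have hgy : g y = 1 := (Set.ext_iff.1 hfg y |>.1 ⟨hy, hfy⟩).2
    simp [hfy, hgy]

end Polyhedral

section IndexOfSmoothness

variable {X Y : Type*} [NormedAddCommGroup X] [NormedSpace ℝ X]
  [NormedAddCommGroup Y] [NormedSpace ℝ Y]

def VanishesOnSupportPairs (T : X →L[ℝ] Y) (R : Set X) (D : X →L[ℝ] Y) : Prop :=
  ∀ x ∈ R ∩ ExtremePts ℝ (closedBall (0 : X) 1),
    ∀ f ∈ ExtremePts ℝ (suppFunctionals ℝ (T x)), f (D x) = 0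

def SupportPairsSeparate (T : X →L[ℝ] Y) (R : Set X) : Prop :=
  ∀ D : X →L[ℝ] Y, VanishesOnSupportPairs T R D → D = 0

def indexPairing {n p : ℕ} (v : Fin n → X) (w : Fin p → StrongDual ℝ Y) :
    (X →L[ℝ] Y) →ₗ[ℝ] Module.Dual ℝ (Fin n × Fin p → ℝ) :=
  LinearMap.mk₂ ℝ (fun D z => ∑ ij, z ij * w ij.2 (D (v ij.1)))
    (fun _ _ _ => by simp [mul_add, Finset.sum_add_distrib])
    (fun _ _ _ => by simp [Finset.mul_sum, mul_left_comm])
    (fun _ _ _ => by simp [add_mul, Finset.sum_add_distrib])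
    (fun _ _ _ => by simp [Finset.mul_sum, mul_assoc])

variable {n p : ℕ} {v : Fin n → X} {w : Fin p → StrongDual ℝ Y}

theorem indexPairing_apply (D : X →L[ℝ] Y) (z : Fin n × Fin p → ℝ) :
    indexPairing v w D z = ∑ ij, z ij * w ij.2 (D (v ij.1)) := rfl

theorem indexPairing_apply_mul (D : X →L[ℝ] Y) (α : Fin n → ℝ) (β : Fin p → ℝ) :
    indexPairing v w D (fun ij => α ij.1 * β ij.2) =
      (∑ j, β j • w j) (D (∑ i, α i • v i)) := by
  simp only [indexPairing_apply, Fintype.sum_prod_type, map_sum, map_smul,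
    sum_apply, smul_apply, smul_eq_mul, Finset.mul_sum]
  exact Finset.sum_congr rfl fun _ _ => Finset.sum_congr rfl fun _ _ => by ring

theorem eq_zero_of_span_eq_top_of_forall_apply_eq_zero
    (hw : Submodule.span ℝ (Set.range w) = ⊤) {y : Y} (h : ∀ j, w j y = 0) : y = 0 := by
  have heval : ((ContinuousLinearMap.apply ℝ ℝ y : StrongDual ℝ Y →L[ℝ] ℝ) :
      StrongDual ℝ Y →ₗ[ℝ] ℝ) = 0 :=
    LinearMap.ext_on hw (by rintro _ ⟨j, rfl⟩; exact h j)
  exact SeparatingDual.eq_zero_of_forall_dual_eq_zero fun f => LinearMap.congr_fun heval f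

theorem indexPairing_injective (hv : Submodule.span ℝ (Set.range v) = ⊤)
    (hw : Submodule.span ℝ (Set.range w) = ⊤) : Function.Injective (indexPairing v w) := by
  rw [← LinearMap.ker_eq_bot, LinearMap.ker_eq_bot']
  intro D hD
  have hDv : ∀ i, D (v i) = 0 := fun i => eq_zero_of_span_eq_top_of_forall_apply_eq_zero hw
    fun j => by simpa [indexPairing_apply, Pi.single_apply] using
      LinearMap.congr_fun hD (Pi.single (i, j) 1)
  exact ContinuousLinearMap.coe_injective
    (LinearMap.ext_on hv (by rintro _ ⟨i, rfl⟩; simp [hDv i]))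

theorem finrank_continuousLinearMap [FiniteDimensional ℝ X] [FiniteDimensional ℝ Y] :
    Module.finrank ℝ (X →L[ℝ] Y) = Module.finrank ℝ X * Module.finrank ℝ Y := by
  rw [← (LinearMap.toContinuousLinearMap : (X →ₗ[ℝ] Y) ≃ₗ[ℝ] _).finrank_eq,
    Module.finrank_linearMap]

theorem finrank_strongDual [FiniteDimensional ℝ Y] :
    Module.finrank ℝ (StrongDual ℝ Y) = Module.finrank ℝ Y := by
  rw [finrank_continuousLinearMap, Module.finrank_self, mul_one]

theorem IsBasisOfSpan.card_eq {𝕜 E : Type*} [RCLike 𝕜] [AddCommGroup E] [Module 𝕜 E]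
    {u : Fin n → E} {S : Set E} (hu : IsBasisOfSpan 𝕜 u S) :
    n = Module.finrank 𝕜 (Submodule.span 𝕜 S) := by
  rw [← hu.2, finrank_span_eq_card hu.1, Fintype.card_fin]

theorem exists_isBasisOfSpan {𝕜 E : Type*} [RCLike 𝕜] [AddCommGroup E] [Module 𝕜 E]
    [FiniteDimensional 𝕜 E] (S : Set E) :
    ∃ u : Fin (Module.finrank 𝕜 (Submodule.span 𝕜 S)) → E, IsBasisOfSpan 𝕜 u S := by
  set b := Module.finBasis 𝕜 (Submodule.span 𝕜 S)
  refine ⟨fun i => b i, b.linearIndependent.map' _ (Submodule.ker_subtype _), ?_⟩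
  rw [show Set.range (fun i => (b i : E)) = (Submodule.span 𝕜 S).subtype '' Set.range b by
    rw [← Set.range_comp]; rfl, Submodule.span_image, b.span_eq, Submodule.map_top,
    Submodule.range_subtype]

theorem indexPairing_bijective [FiniteDimensional ℝ X] [FiniteDimensional ℝ Y]
    (hv : IsBasisOfSpan ℝ v Set.univ) (hw : IsBasisOfSpan ℝ w Set.univ) :
    Function.Bijective (indexPairing v w) := by
  have hv' := hv.2.trans Submodule.span_univ
  have hw' := hw.2.trans Submodule.span_univ
  have hinj := indexPairing_injective hv' hw'
  refine ⟨hinj, (LinearMap.injective_iff_surjective_of_finrank_eq_finrank ?_).1 hinj⟩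
  rw [Subspace.dual_finrank_eq, Module.finrank_fintype_fun_eq_card, Fintype.card_prod,
    Fintype.card_fin, Fintype.card_fin, hv.card_eq, hw.card_eq, Submodule.span_univ,
    Submodule.span_univ, finrank_top, finrank_top, finrank_strongDual,
    finrank_continuousLinearMap]

theorem vanishesOnSupportPairs_iff_mem_dualAnnihilator {T : X →L[ℝ] Y} {R : Set X}
    (hv : Submodule.span ℝ (Set.range v) = Submodule.span ℝ R)
    (hw : Submodule.span ℝ (Set.range w) = Submodule.span ℝ (suppOfImage ℝ T R))
    (D : X →L[ℝ] Y) :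
    VanishesOnSupportPairs T R D ↔
      indexPairing v w D ∈ (indexSubspace ℝ T R v w).dualAnnihilator := by
  rw [← SetLike.mem_coe, indexSubspace, Submodule.coe_dualAnnihilator_span, Set.mem_ofPred_eq]
  constructor
  · rintro hD _ ⟨α, β, hx, hf, rfl⟩
    exact (indexPairing_apply_mul D α β).trans (hD _ hx _ hf)
  · intro hD x hx f hf
    have hfW : f ∈ suppOfImage ℝ T R := ⟨x, hx, hf.1⟩
    obtain ⟨α, rfl⟩ := (Submodule.mem_span_range_iff_exists_fun ℝ).1
      (by rw [hv]; exact Submodule.subset_span hx.1)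
    obtain ⟨β, rfl⟩ := (Submodule.mem_span_range_iff_exists_fun ℝ).1
      (by rw [hw]; exact Submodule.subset_span hfW)
    have hαβ : (fun ij => α ij.1 * β ij.2) ∈ LinearMap.ker (indexPairing v w D) :=
      hD ⟨α, β, hx, hf, rfl⟩
    exact (indexPairing_apply_mul D α β).symm.trans hαβ

theorem supportPairsSeparate_iff_indexSubspace_eq_top [FiniteDimensional ℝ X]
    [FiniteDimensional ℝ Y] {T : X →L[ℝ] Y} {R : Set X}
    (hv : IsBasisOfSpan ℝ v R) (hw : IsBasisOfSpan ℝ w (suppOfImage ℝ T R))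
    (hR : Submodule.span ℝ R = ⊤) (hW : Submodule.span ℝ (suppOfImage ℝ T R) = ⊤) :
    SupportPairsSeparate T R ↔ indexSubspace ℝ T R v w = ⊤ := by
  have hP := indexPairing_bijective (v := v) (w := w)
    ⟨hv.1, by rw [hv.2, hR, Submodule.span_univ]⟩ ⟨hw.1, by rw [hw.2, hW, Submodule.span_univ]⟩
  rw [← Submodule.dualAnnihilator_eq_bot_iff, Submodule.eq_bot_iff, SupportPairsSeparate]
  simp only [vanishesOnSupportPairs_iff_mem_dualAnnihilator hv.2 hw.2]
  constructor
  · intro h φ hφ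
    obtain ⟨D, rfl⟩ := hP.2 φ
    rw [h D hφ, map_zero]
  · intro h D hD
    exact hP.1 (by rw [h _ hD, map_zero])

theorem span_eq_top_of_supportPairsSeparate [FiniteDimensional ℝ X] [Nontrivial Y]
    {T : X →L[ℝ] Y} {R : Set X} (h : SupportPairsSeparate T R) : Submodule.span ℝ R = ⊤ := by
  by_contra hR
  obtain ⟨g, hg, hRg⟩ := Submodule.exists_le_ker_of_lt_top _ (lt_top_iff_ne_top.2 hR)
  obtain ⟨y, hy⟩ := exists_ne (0 : Y)
  have hD : (LinearMap.toContinuousLinearMap g).smulRight y = 0 := h _ fun x hx f _ => by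
    simp [LinearMap.mem_ker.1 (hRg (Submodule.subset_span hx.1))]
  exact hg (LinearMap.ext fun x => by simpa [hy] using congr($hD x))

theorem exists_ne_zero_forall_apply_eq_zero [FiniteDimensional ℝ Y]
    {S : Set (StrongDual ℝ Y)} (hS : Submodule.span ℝ S ≠ ⊤) :
    ∃ y : Y, y ≠ 0 ∧ ∀ f ∈ S, f y = 0 := by
  set e : Module.Dual ℝ Y ≃ₗ[ℝ] StrongDual ℝ Y := LinearMap.toContinuousLinearMap
  set Φ := (Submodule.span ℝ S).comap (e : Module.Dual ℝ Y →ₗ[ℝ] StrongDual ℝ Y)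
  have hΦ : Φ.dualCoannihilator ≠ ⊥ := by
    intro h
    apply hS
    rw [eq_top_iff]
    intro f _
    have : e.symm f ∈ Φ := by
      rw [← Subspace.dualCoannihilator_dualAnnihilator_eq (W := Φ), h,
        Submodule.dualAnnihilator_bot]
      trivial
    simpa [Φ] using this
  obtain ⟨y, hy, hy0⟩ := (Submodule.ne_bot_iff _).1 hΦ
  refine ⟨y, hy0, fun f hf => ?_⟩
  have hfΦ : e.symm f ∈ Φ := by simpa [Φ] using Submodule.subset_span hf
  exact (Submodule.mem_dualCoannihilator y).1 hy (e.symm f) hfΦ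

theorem span_suppOfImage_eq_top_of_supportPairsSeparate [FiniteDimensional ℝ Y] [Nontrivial X]
    {T : X →L[ℝ] Y} {R : Set X} (h : SupportPairsSeparate T R) :
    Submodule.span ℝ (suppOfImage ℝ T R) = ⊤ := by
  by_contra hW
  obtain ⟨y, hy, hWy⟩ := exists_ne_zero_forall_apply_eq_zero hW
  obtain ⟨x, hx⟩ := exists_ne (0 : X)
  obtain ⟨g, -, hgx⟩ := exists_dual_vector ℝ x (norm_ne_zero_iff.2 hx)
  have hD : g.smulRight y = 0 := h _ fun x' hx' f hf => by simp [hWy f ⟨x', hx', hf.1⟩]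
  simpa [hgx, hx, hy] using congr($hD x)

theorem hasIndexOfSmoothness_iff_supportPairsSeparate [FiniteDimensional ℝ X]
    [FiniteDimensional ℝ Y] [Nontrivial X] [Nontrivial Y] {T : X →L[ℝ] Y} {R : Set X} :
    HasIndexOfSmoothness ℝ T R (Module.finrank ℝ X * Module.finrank ℝ Y) ↔
      SupportPairsSeparate T R := by
  constructor
  · intro h
    obtain ⟨v, hv⟩ := exists_isBasisOfSpan (𝕜 := ℝ) R
    obtain ⟨w, hw⟩ := exists_isBasisOfSpan (𝕜 := ℝ) (suppOfImage ℝ T R)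
    have hZ := h _ _ v w hv hw
    set Z := indexSubspace ℝ T R v w
    have hZle : Module.finrank ℝ Z ≤ Module.finrank ℝ (Submodule.span ℝ R) *
        Module.finrank ℝ (Submodule.span ℝ (suppOfImage ℝ T R)) := by
      simpa [Module.finrank_fintype_fun_eq_card] using Z.finrank_le
    have hRle := (Submodule.span ℝ R).finrank_le
    have hWle := (Submodule.span ℝ (suppOfImage ℝ T R)).finrank_le
    rw [finrank_strongDual] at hWle
    have hm := Module.finrank_pos (R := ℝ) (M := X)
    have hn := Module.finrank_pos (R := ℝ) (M := Y)
    have hR : Submodule.span ℝ R = ⊤ := Submodule.eq_top_of_finrank_eq (by nlinarith)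
    have hW : Submodule.span ℝ (suppOfImage ℝ T R) = ⊤ :=
      Submodule.eq_top_of_finrank_eq (by rw [finrank_strongDual]; nlinarith)
    refine (supportPairsSeparate_iff_indexSubspace_eq_top hv hw hR hW).2
      (Submodule.eq_top_of_finrank_eq ?_)
    rw [hZ, Module.finrank_fintype_fun_eq_card, Fintype.card_prod, Fintype.card_fin,
      Fintype.card_fin, hR, hW, finrank_top, finrank_top, finrank_strongDual]
  · intro h n p v w hv hw
    have hR := span_eq_top_of_supportPairsSeparate h
    have hW := span_suppOfImage_eq_top_of_supportPairsSeparate h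
    rw [(supportPairsSeparate_iff_indexSubspace_eq_top hv hw hR hW).1 h, finrank_top,
      Module.finrank_fintype_fun_eq_card, Fintype.card_prod, Fintype.card_fin, Fintype.card_fin,
      hv.card_eq, hw.card_eq, hR, hW, finrank_top, finrank_top, finrank_strongDual]

end IndexOfSmoothness

section ExtremeContraction

variable {X Y : Type*} [NormedAddCommGroup X] [NormedSpace ℝ X]
  [NormedAddCommGroup Y] [NormedSpace ℝ Y]

theorem vanishesOnSupportPairs_sub_of_mem_openSegment {T A B : X →L[ℝ] Y} (hA : ‖A‖ ≤ 1)
    (hB : ‖B‖ ≤ 1) (hT : T ∈ openSegment ℝ A B) :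
    VanishesOnSupportPairs T (normAttainSet ℝ T) (A - T) := by
  obtain ⟨a, b, ha, hb, hab, rfl⟩ := hT
  rintro x ⟨hx, -⟩ f hf
  obtain ⟨hf₁, hfx⟩ := hf.1
  have hAx : f (A x) ≤ 1 := apply_le_one_of_norm_le_one hf₁.le
    ((A.le_opNorm x).trans (by simpa [hx.1] using hA))
  have hBx : f (B x) ≤ 1 := apply_le_one_of_norm_le_one hf₁.le
    ((B.le_opNorm x).trans (by simpa [hx.1] using hB))
  simp only [add_apply, smul_apply, map_add, map_smul, smul_eq_mul] at hfx
  simp only [sub_apply, add_apply, smul_apply, map_sub, map_add, map_smul, smul_eq_mul]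
  nlinarith

theorem mem_extremePoints_of_supportPairsSeparate {T : X →L[ℝ] Y} (hT : ‖T‖ ≤ 1)
    (h : SupportPairsSeparate T (normAttainSet ℝ T)) :
    T ∈ (closedBall (0 : X →L[ℝ] Y) 1).extremePoints ℝ := by
  refine mem_extremePoints_iff_left.2 ⟨mem_closedBall_zero_iff.2 hT, fun A hA B hB hTAB => ?_⟩
  exact sub_eq_zero.1 (h _ (vanishesOnSupportPairs_sub_of_mem_openSegment
    (mem_closedBall_zero_iff.1 hA) (mem_closedBall_zero_iff.1 hB) hTAB))

theorem mem_supportPairs_of_apply_eq_one {T : X →L[ℝ] Y} (hT : ‖T‖ ≤ 1) {x : X}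
    (hx : x ∈ (closedBall (0 : X) 1).extremePoints ℝ) {f : StrongDual ℝ Y}
    (hf : f ∈ (closedBall (0 : StrongDual ℝ Y) 1).extremePoints ℝ) (hfx : f (T x) = 1) :
    x ∈ normAttainSet ℝ T ∩ ExtremePts ℝ (closedBall (0 : X) 1) ∧
      f ∈ ExtremePts ℝ (suppFunctionals ℝ (T x)) := by
  have hx₁ : ‖x‖ ≤ 1 := mem_closedBall_zero_iff.1 hx.1
  have hf₁ : ‖f‖ ≤ 1 := mem_closedBall_zero_iff.1 hf.1
  have hfT : 1 ≤ ‖f‖ * ‖T x‖ := hfx ▸ (Real.le_norm_self _).trans (f.le_opNorm _)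
  have hTx : ‖T x‖ ≤ ‖T‖ * ‖x‖ := T.le_opNorm x
  have hTx₁ : ‖T x‖ ≤ 1 := hTx.trans (mul_le_one₀ hT (norm_nonneg _) hx₁)
  have hf_norm : ‖f‖ = 1 := by nlinarith [norm_nonneg f]
  have hTx_norm : ‖T x‖ = 1 := by nlinarith [norm_nonneg (T x)]
  have hx_norm : ‖x‖ = 1 := by nlinarith [mul_le_mul_of_nonneg_right hT (norm_nonneg x)]
  have hT_norm : ‖T‖ = 1 := le_antisymm hT (by simpa [hx_norm, hTx_norm] using hTx)
  have hJ : suppFunctionals ℝ (T x) ⊆ closedBall 0 1 := fun g hg =>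
    mem_closedBall_zero_iff.2 hg.1.le
  rw [extremePts_eq_extremePoints, extremePts_eq_extremePoints]
  exact ⟨⟨⟨hx_norm, hTx_norm.trans hT_norm.symm⟩, hx⟩,
    inter_extremePoints_subset_extremePoints_of_subset hJ ⟨⟨hf_norm, hfx⟩, hf⟩⟩

theorem supportPairsSeparate_of_mem_extremePoints [FiniteDimensional ℝ X]
    [FiniteDimensional ℝ Y] (hX : ((closedBall (0 : X) 1).extremePoints ℝ).Finite)
    (hY : ((closedBall (0 : Y) 1).extremePoints ℝ).Finite) {T : X →L[ℝ] Y}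
    (hT : T ∈ (closedBall (0 : X →L[ℝ] Y) 1).extremePoints ℝ) :
    SupportPairsSeparate T (normAttainSet ℝ T) := by
  intro D hD
  have hT₁ : ‖T‖ ≤ 1 := mem_closedBall_zero_iff.1 hT.1
  obtain ⟨ε, hε, hle⟩ := (hX.prod (finite_extremePoints_dual hY)).exists_pos_forall_add_mul_le
    (a := fun q => q.2 (T q.1)) (b := fun q => q.2 (D q.1))
    (fun q hq => apply_le_one_of_norm_le_one (mem_closedBall_zero_iff.1 hq.2.1)
      ((T.le_opNorm q.1).trans (mul_le_one₀ hT₁ (norm_nonneg _)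
        (mem_closedBall_zero_iff.1 hq.1.1))))
    (fun q hq hq₁ => hD q.1 (mem_supportPairs_of_apply_eq_one hT₁ hq.1 hq.2 hq₁).1 q.2
      (mem_supportPairs_of_apply_eq_one hT₁ hq.1 hq.2 hq₁).2)
  have hball : ∀ c : ℝ, |c| ≤ ε → T + c • D ∈ closedBall 0 1 := fun c hc =>
    mem_closedBall_zero_iff.2 (opNorm_le_one_of_forall_extremePoints fun x hx f hf => by
      simpa using hle (x, f) ⟨hx, hf⟩ c hc)
  have hεD : ε • D = 0 := eq_zero_of_add_mem_of_sub_mem hT (hball ε (abs_of_pos hε).le)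
    (by convert hball (-ε) (by simp [abs_of_pos hε]) using 1; module)
  exact (smul_eq_zero.1 hεD).resolve_left hε.ne'

end ExtremeContraction

theorem extreme_contraction_iff_index_polyhedral
    {X Y : Type*}
    [NormedAddCommGroup X] [NormedSpace ℝ X] [FiniteDimensional ℝ X]
    [NormedAddCommGroup Y] [NormedSpace ℝ Y] [FiniteDimensional ℝ Y]
    (hpolyX : PolyhedralSp X) (hpolyY : PolyhedralSp Y)
    {m n : ℕ} (hdimX : Module.finrank ℝ X = m) (hdimY : Module.finrank ℝ Y = n)
    (T : X →L[ℝ] Y) (hT : ‖T‖ = 1) :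
    T ∈ ExtremePts ℝ (closedBall (0 : X →L[ℝ] Y) 1) ↔
      HasIndexOfSmoothness ℝ T (normAttainSet ℝ T) (m * n) := by
  obtain ⟨x, hx⟩ : ∃ x, T x ≠ 0 := by
    by_contra! h
    simp [show T = 0 from ContinuousLinearMap.ext fun x => by simp [h x]] at hT
  have : Nontrivial X := nontrivial_of_ne x 0 (by rintro rfl; simp at hx)
  have : Nontrivial Y := nontrivial_of_ne (T x) 0 hx
  rw [PolyhedralSp, extremePts_eq_extremePoints] at hpolyX hpolyY
  rw [extremePts_eq_extremePoints, ← hdimX, ← hdimY,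
    hasIndexOfSmoothness_iff_supportPairsSeparate]
  exact ⟨supportPairsSeparate_of_mem_extremePoints hpolyX hpolyY,
    mem_extremePoints_of_supportPairsSeparate hT.le⟩
end

section
/- Let X be a smooth Banach space over K (ℝ or ℂ) and let Y be an n-dimensional subspace of X. Then Y is coproximinal in X if and only if the linear span of {y* ∈ X* : ‖y*‖ = 1 and y* ∈ J(y) for some y ∈ Y with ‖y‖ = 1} has dimension n. -/
open Metric Set
open scoped ENNReal

/-!
Let `W` be the span of the support functionals at unit vectors of `V`, paired with `V` by
evaluation. Hahn–Banach gives every nonzero `v ∈ V` a functional in `W` norming it, so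
`V → W*` is injective and `dim W ≥ n`.

If `y₀ ∈ V` is a best coapproximation of `x`, every unit `y ∈ V` is Birkhoff–James orthogonal
to `x - y₀`, so some support functional at `y` vanishes on `x - y₀` (norm the class of `y` in
`X ⧸ 𝕜 (x - y₀)`); by smoothness it is the only one. Hence all of `W` agrees at `x` and `y₀`,
`W → V*` is injective and `dim W = n`. Conversely, if `dim W = n` then `V → W*` is onto, so
some `y₀ ∈ V` has `f y₀ = f x` for all `f ∈ W`; testing `x - z` against a functional of `W`
norming `y₀ - z` gives `‖y₀ - z‖ ≤ ‖x - z‖`.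
-/

section Pairing

variable {K V W : Type*} [Field K] [AddCommGroup V] [Module K V] [AddCommGroup W] [Module K W]
  [FiniteDimensional K V] {B : W →ₗ[K] V →ₗ[K] K}

theorem LinearMap.finrank_eq_of_injective_of_injective_flip [FiniteDimensional K W]
    (hB : Function.Injective B) (hB' : Function.Injective B.flip) :
    Module.finrank K W = Module.finrank K V := by
  have hWV := LinearMap.finrank_le_finrank_of_injective (f := (B : W →ₗ[K] Module.Dual K V)) hB
  have hVW := LinearMap.finrank_le_finrank_of_injective
    (f := (B.flip : V →ₗ[K] Module.Dual K W)) hB'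
  rw [Subspace.dual_finrank_eq] at hWV hVW
  exact le_antisymm hWV hVW

theorem LinearMap.surjective_flip_of_finrank_eq [FiniteDimensional K W]
    (hB' : Function.Injective B.flip) (h : Module.finrank K W = Module.finrank K V) :
    Function.Surjective B.flip :=
  (LinearMap.injective_iff_surjective_of_finrank_eq_finrank (by simp [h])).mp hB'

end Pairing

section

variable {𝕜 X : Type*} [RCLike 𝕜] [NormedAddCommGroup X] [NormedSpace 𝕜 X]

theorem exists_mem_suppFunctionals_apply_eq_zero_of_bjOrtho {v u : X} (hv : ‖v‖ = 1)
    (h : BJOrtho 𝕜 v u) : ∃ f ∈ suppFunctionals 𝕜 v, f u = 0 := by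
  set U := 𝕜 ∙ u
  have hUv : ‖(Submodule.Quotient.mk v : X ⧸ U)‖ = 1 := by
    refine le_antisymm (hv ▸ Submodule.Quotient.norm_mk_le U v) ?_
    rw [← hv]
    refine (QuotientAddGroup.le_norm_iff (S := U.toAddSubgroup)).mpr fun m hm => ?_
    obtain ⟨c, hc⟩ := Submodule.mem_span_singleton.mp ((Submodule.Quotient.eq U).mp hm)
    rw [show m = v + c • u by rw [hc]; abel]
    exact h c
  obtain ⟨g, hg, hgv⟩ := exists_dual_vector 𝕜 (Submodule.Quotient.mk v : X ⧸ U) (by simp [hUv])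
  have hfv : g.comp U.mkQL v = 1 := by simp [hgv, hUv]
  refine ⟨g.comp U.mkQL, ⟨le_antisymm ?_ ?_, hfv⟩, ?_⟩
  · refine ContinuousLinearMap.opNorm_le_bound _ zero_le_one fun x => ?_
    calc ‖g (U.mkQL x)‖ ≤ ‖g‖ * ‖(Submodule.Quotient.mk x : X ⧸ U)‖ := g.le_opNorm _
      _ ≤ 1 * ‖x‖ := by rw [hg]; gcongr; exact Submodule.Quotient.norm_mk_le U x
  · simpa [hfv, hv] using (g.comp U.mkQL).le_opNorm v
  · simp [U, (Submodule.Quotient.mk_eq_zero U).mpr (Submodule.mem_span_singleton_self u)]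

theorem SmoothSp.apply_eq_zero_of_bjOrtho (hX : SmoothSp 𝕜 X) {v u : X} (hv : ‖v‖ = 1)
    (h : BJOrtho 𝕜 v u) {f : StrongDual 𝕜 X} (hf : f ∈ suppFunctionals 𝕜 v) : f u = 0 := by
  obtain ⟨g, hgv, hgu⟩ := exists_mem_suppFunctionals_apply_eq_zero_of_bjOrtho hv h
  obtain ⟨f₀, hJ⟩ := hX v hv
  rw [hJ] at hf hgv
  rwa [Set.eq_of_mem_singleton hf, ← Set.eq_of_mem_singleton hgv]

theorem bjOrtho_sub_of_forall_norm_sub_le {V : Submodule 𝕜 X} {x y₀ y : X} (hy₀ : y₀ ∈ V)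
    (hbest : ∀ z ∈ V, ‖y₀ - z‖ ≤ ‖x - z‖) (hy : y ∈ V) : BJOrtho 𝕜 y (x - y₀) := by
  intro c
  rcases eq_or_ne c 0 with rfl | hc
  · simp
  have h := hbest (y₀ - c⁻¹ • y) (V.sub_mem hy₀ (V.smul_mem _ hy))
  rw [sub_sub_cancel, show x - (y₀ - c⁻¹ • y) = c⁻¹ • (y + c • (x - y₀)) by
    rw [smul_add, smul_smul, inv_mul_cancel₀ hc, one_smul]; abel, norm_smul, norm_smul] at h
  exact le_of_mul_le_mul_left h (norm_pos_iff.mpr (inv_ne_zero hc))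

def suppFunctionalsOn (V : Submodule 𝕜 X) : Set (StrongDual 𝕜 X) :=
  {f | ‖f‖ = 1 ∧ ∃ y ∈ V, ‖y‖ = 1 ∧ f ∈ suppFunctionals 𝕜 y}

theorem exists_mem_suppFunctionalsOn_apply_eq_norm {V : Submodule 𝕜 X} {v : X} (hvV : v ∈ V)
    (hv : v ≠ 0) : ∃ g ∈ suppFunctionalsOn V, g v = ‖v‖ := by
  have hv' : ‖v‖ ≠ 0 := norm_ne_zero_iff.mpr hv
  obtain ⟨g, hg, hgv⟩ := exists_dual_vector 𝕜 v hv'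
  refine ⟨g, ⟨hg, (‖v‖⁻¹ : 𝕜) • v, V.smul_mem _ hvV, ?_, hg, ?_⟩, hgv⟩
  · rw [norm_smul, norm_inv, RCLike.norm_ofReal, abs_norm, inv_mul_cancel₀ hv']
  · rw [map_smul, hgv, smul_eq_mul, inv_mul_cancel₀ (RCLike.ofReal_ne_zero.mpr hv')]

def restrictPairing (V : Submodule 𝕜 X) (W : Submodule 𝕜 (StrongDual 𝕜 X)) :
    W →ₗ[𝕜] V →ₗ[𝕜] 𝕜 :=
  (topDualPairing 𝕜 X).compl₁₂ W.subtype V.subtype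

theorem injective_restrictPairing_flip (V : Submodule 𝕜 X) :
    Function.Injective (restrictPairing V (Submodule.span 𝕜 (suppFunctionalsOn V))).flip := by
  refine (injective_iff_map_eq_zero _).mpr fun v hv => ?_
  by_contra hv0
  obtain ⟨g, hg, hgv⟩ := exists_mem_suppFunctionalsOn_apply_eq_norm v.2 (by simpa using hv0)
  have hg0 : g v = 0 := LinearMap.congr_fun hv ⟨g, Submodule.subset_span hg⟩
  rw [hg0, eq_comm, RCLike.ofReal_eq_zero, norm_eq_zero] at hgv
  exact hv0 (Subtype.ext hgv)

theorem Coproximinal.injective_restrictPairing (hX : SmoothSp 𝕜 X) {V : Submodule 𝕜 X}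
    (hV : Coproximinal 𝕜 V) :
    Function.Injective (restrictPairing V (Submodule.span 𝕜 (suppFunctionalsOn V))) := by
  refine (injective_iff_map_eq_zero _).mpr fun f hf =>
    Subtype.ext (ContinuousLinearMap.ext fun x => ?_)
  obtain ⟨y₀, hy₀, hbest⟩ := hV x
  have hker : Submodule.span 𝕜 (suppFunctionalsOn V) ≤
      LinearMap.ker ((topDualPairing 𝕜 X).flip (x - y₀)) := by
    refine Submodule.span_le.mpr ?_
    rintro g ⟨-, y, hy, hy1, hg⟩
    exact hX.apply_eq_zero_of_bjOrtho hy1 (bjOrtho_sub_of_forall_norm_sub_le hy₀ hbest hy) hg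
  have hfx : (f : StrongDual 𝕜 X) (x - y₀) = 0 := hker f.2
  have hfy₀ : (f : StrongDual 𝕜 X) y₀ = 0 := LinearMap.congr_fun hf ⟨y₀, hy₀⟩
  simpa [hfy₀, sub_eq_zero] using hfx

theorem coproximinal_of_surjective_restrictPairing_flip {V : Submodule 𝕜 X}
    (hsurj : Function.Surjective
      (restrictPairing V (Submodule.span 𝕜 (suppFunctionalsOn V))).flip) :
    Coproximinal 𝕜 V := by
  intro x
  obtain ⟨y₀, hy₀⟩ := hsurj ((topDualPairing 𝕜 X).flip x ∘ₗ Submodule.subtype _)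
  refine ⟨y₀, y₀.2, fun z hz => ?_⟩
  rcases eq_or_ne ((y₀ : X) - z) 0 with h0 | h0
  · simp [h0]
  obtain ⟨g, hg, hgy⟩ := exists_mem_suppFunctionalsOn_apply_eq_norm (V.sub_mem y₀.2 hz) h0
  have hgx : g y₀ = g x := LinearMap.congr_fun hy₀ ⟨g, Submodule.subset_span hg⟩
  calc ‖(y₀ : X) - z‖ = ‖g (x - z)‖ := by
        rw [map_sub, ← hgx, ← map_sub, hgy, RCLike.norm_ofReal, abs_norm]
    _ ≤ ‖g‖ * ‖x - z‖ := g.le_opNorm _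
    _ = ‖x - z‖ := by rw [hg.1, one_mul]

end

theorem coproximinal_iff_span_suppFunctionals_general
    {𝕜 X : Type*} [RCLike 𝕜]
    [NormedAddCommGroup X] [NormedSpace 𝕜 X]
    (hXsm : SmoothSp 𝕜 X)
    (V : Submodule 𝕜 X) [FiniteDimensional 𝕜 V] {n : ℕ}
    (hdim : Module.finrank 𝕜 V = n) :
    Coproximinal 𝕜 V ↔
      Module.rank 𝕜 ↥(Submodule.span 𝕜
        {f : StrongDual 𝕜 X | ‖f‖ = 1 ∧ ∃ y ∈ V, ‖y‖ = 1 ∧ f ∈ suppFunctionals 𝕜 y})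
        = n := by
  let W := Submodule.span 𝕜 (suppFunctionalsOn V)
  change _ ↔ Module.rank 𝕜 W = n
  have hflip := injective_restrictPairing_flip V
  -- `W` is passed by name below: elaboration cannot unify the submodule's `AddCommMonoid`
  -- instance with the `AddCommGroup.toAddCommMonoid ?_` the linear-algebra lemmas expect.
  constructor
  · intro hV
    have hinj := hV.injective_restrictPairing hXsm
    have := FiniteDimensional.of_injective (V := W) (V₂ := Module.Dual 𝕜 V) _ hinj
    rw [← Module.finrank_eq_rank,
      LinearMap.finrank_eq_of_injective_of_injective_flip (W := W) hinj hflip, hdim]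
  · intro hrank
    have := FiniteDimensional.of_rank_eq_nat (V := W) hrank
    exact coproximinal_of_surjective_restrictPairing_flip
      (LinearMap.surjective_flip_of_finrank_eq (W := W) hflip
        ((Module.finrank_eq_of_rank_eq hrank).trans hdim.symm))

theorem coproximinal_iff_span_suppFunctionals
    {𝕜 X : Type*} [RCLike 𝕜]
    [NormedAddCommGroup X] [NormedSpace 𝕜 X] [CompleteSpace X]
    (hXsm : SmoothSp 𝕜 X)
    (V : Submodule 𝕜 X) [FiniteDimensional 𝕜 V] {n : ℕ}
    (hdim : Module.finrank 𝕜 V = n) :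
    Coproximinal 𝕜 V ↔
      Module.rank 𝕜 ↥(Submodule.span 𝕜
        {f : StrongDual 𝕜 X | ‖f‖ = 1 ∧ ∃ y ∈ V, ‖y‖ = 1 ∧ f ∈ suppFunctionals 𝕜 y})
        = n :=
  coproximinal_iff_span_suppFunctionals_general hXsm V hdim
end
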